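/- Let d, e, f ∈ ℝ with 5e + f > 0, and for a real parameter t write g(s; t) for the sextic g with temperature t. Suppose t₁ < t₂ < 0 and that g'(·; t₂) has a largest real zero s₊(t₂) > 0. Then g'(·; t₁) has a largest real zero s₊(t₁) satisfying s₊(t₁) > s₊(t₂); that is, the largest positive critical point s₊ of g strictly increases as the temperature t decreases below 0. -/
import Mathlib


noncomputable section
open MeasureTheory

/-- The sixth-order bulk potential restricted to uniaxial Q-tensors:
`g(s) = (t/3)s² − (2√6/9)s³ + (2/9)s⁴ + (4d/135)s⁵ + (4e/81)s⁶ + (2(f−e)/243)s⁶`. -/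
def g (t d e f s : ℝ) : ℝ :=
  t / 3 * s ^ 2 - 2 * Real.sqrt 6 / 9 * s ^ 3 + 2 / 9 * s ^ 4
    + 4 * d / 135 * s ^ 5 + 4 * e / 81 * s ^ 6 + 2 * (f - e) / 243 * s ^ 6

/-- Explicit derivative of `g`. -/
lemma g_hasDerivAt (t d e f s : ℝ) :
    HasDerivAt (g t d e f)
      (2 * t / 3 * s - 2 * Real.sqrt 6 / 3 * s ^ 2 + 8 / 9 * s ^ 3
        + 4 * d / 27 * s ^ 4 + (20 * e + 4 * f) / 81 * s ^ 5) s := by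
  have h : HasDerivAt (g t d e f)
      (t / 3 * (↑(2:ℕ) * s ^ 1) - 2 * Real.sqrt 6 / 9 * (↑(3:ℕ) * s ^ 2)
        + 2 / 9 * (↑(4:ℕ) * s ^ 3) + 4 * d / 135 * (↑(5:ℕ) * s ^ 4)
        + 4 * e / 81 * (↑(6:ℕ) * s ^ 5) + 2 * (f - e) / 243 * (↑(6:ℕ) * s ^ 5)) s := by
    exact ((((((hasDerivAt_pow 2 s).const_mul (t / 3)).sub
      ((hasDerivAt_pow 3 s).const_mul (2 * Real.sqrt 6 / 9))).add
      ((hasDerivAt_pow 4 s).const_mul (2 / 9))).add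
      ((hasDerivAt_pow 5 s).const_mul (4 * d / 135))).add
      ((hasDerivAt_pow 6 s).const_mul (4 * e / 81))).add
      ((hasDerivAt_pow 6 s).const_mul (2 * (f - e) / 243))
  convert h using 1
  push_cast
  ring

lemma deriv_g (t d e f : ℝ) :
    deriv (g t d e f) = fun s => 2 * t / 3 * s - 2 * Real.sqrt 6 / 3 * s ^ 2 + 8 / 9 * s ^ 3
        + 4 * d / 27 * s ^ 4 + (20 * e + 4 * f) / 81 * s ^ 5 :=
  funext fun s => (g_hasDerivAt t d e f s).deriv

/-- The largest positive critical point `s₊` of `g` strictly increases as the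
temperature `t` decreases below 0. -/
theorem largest_critical_point_increases_as_t_decreases
    (d e f t₁ t₂ s₂ : ℝ) (h5ef : 0 < 5 * e + f) (h12 : t₁ < t₂) (h20 : t₂ < 0)
    (hs₂ : 0 < s₂) (hz₂ : deriv (g t₂ d e f) s₂ = 0)
    (hl₂ : ∀ u : ℝ, deriv (g t₂ d e f) u = 0 → u ≤ s₂) :
    ∃ s₁ : ℝ, deriv (g t₁ d e f) s₁ = 0 ∧
      (∀ u : ℝ, deriv (g t₁ d e f) u = 0 → u ≤ s₁) ∧ s₂ < s₁ := by
  simp only [deriv_g] at hz₂ ⊢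
  set a : ℝ := Real.sqrt 6 with hadef
  set c1 : ℝ := 2 * t₁ / 3 with hc1
  set c4 : ℝ := 4 * d / 27 with hc4
  set c5 : ℝ := (20 * e + 4 * f) / 81 with hc5def
  set φ : ℝ → ℝ := fun s => c1 * s - 2 * a / 3 * s ^ 2 + 8 / 9 * s ^ 3
      + c4 * s ^ 4 + c5 * s ^ 5 with hφ
  have hcont : Continuous φ := by fun_prop
  have hc5 : 0 < c5 := by rw [hc5def]; linarith
  have ha : 0 ≤ a := Real.sqrt_nonneg 6
  -- φ is negative at s₂
  have hneg : φ s₂ < 0 := by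
    have key : φ s₂ = (2 * t₂ / 3 * s₂ - 2 * a / 3 * s₂ ^ 2 + 8 / 9 * s₂ ^ 3
        + c4 * s₂ ^ 4 + c5 * s₂ ^ 5) + 2 * (t₁ - t₂) / 3 * s₂ := by
      simp only [hφ, hc1]; ring
    rw [key, hz₂]
    nlinarith
  set B : ℝ := |c1| + 2 * a / 3 + |c4| with hB
  have hBnn : 0 ≤ B := by positivity
  set M : ℝ := max (s₂ + 1) (max 1 ((B + 1) / c5)) with hM
  have hM1 : (1:ℝ) ≤ M := le_trans (le_max_left 1 _) (le_max_right _ _)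
  have hMs2 : s₂ < M := lt_of_lt_of_le (by linarith) (le_max_left _ _)
  have hMB : (B + 1) / c5 ≤ M := le_trans (le_max_right 1 _) (le_max_right _ _)
  have hpos : ∀ s : ℝ, M ≤ s → 0 < φ s := by
    intro s hs
    have hs1 : (1:ℝ) ≤ s := le_trans hM1 hs
    have hs0 : (0:ℝ) ≤ s := by linarith
    have h14 : s ≤ s ^ 4 := by
      calc s = s ^ 1 := (pow_one s).symm
        _ ≤ s ^ 4 := pow_le_pow_right₀ hs1 (by norm_num)
    have h24 : s ^ 2 ≤ s ^ 4 := pow_le_pow_right₀ hs1 (by norm_num)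
    have hs4 : (1:ℝ) ≤ s ^ 4 := le_trans hs1 h14
    have hcs : B + 1 ≤ c5 * s := by
      rw [div_le_iff₀ hc5] at hMB
      have h' := mul_le_mul_of_nonneg_left hs hc5.le
      linarith
    have f1 : 0 ≤ (c1 + |c1|) * s :=
      mul_nonneg (by linarith [neg_abs_le c1]) hs0
    have f2 : 0 ≤ |c1| * (s ^ 4 - s) := mul_nonneg (abs_nonneg c1) (by linarith)
    have f3 : 0 ≤ (2 * a / 3) * (s ^ 4 - s ^ 2) := mul_nonneg (by positivity) (by linarith)
    have f4 : 0 ≤ (c4 + |c4|) * s ^ 4 :=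
      mul_nonneg (by linarith [neg_abs_le c4]) (by positivity)
    have hcs' : |c1| + 2 * a / 3 + |c4| + 1 ≤ c5 * s := by rw [hB] at hcs; linarith
    have f6 : 0 ≤ (c5 * s - (|c1| + 2 * a / 3 + |c4| + 1)) * s ^ 4 :=
      mul_nonneg (by linarith) (by positivity)
    have f7 : 0 ≤ (8:ℝ) / 9 * s ^ 3 := by positivity
    have hφs : φ s = c1 * s - 2 * a / 3 * s ^ 2 + 8 / 9 * s ^ 3 + c4 * s ^ 4 + c5 * s ^ 5 := rfl
    rw [hφs]
    linarith [f1, f2, f3, f4, f6, f7, hs4]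
  -- IVT gives a zero strictly between s₂ and M
  have hMpos : 0 < φ M := hpos M le_rfl
  have hIVT : (0:ℝ) ∈ φ '' Set.Ioo s₂ M :=
    intermediate_value_Ioo hMs2.le hcont.continuousOn ⟨hneg, hMpos⟩
  obtain ⟨r, hrmem, hr0⟩ := hIVT
  -- the set of zeros
  set Z : Set ℝ := {u | φ u = 0} with hZ
  have hZne : Z.Nonempty := ⟨r, hr0⟩
  have hZclosed : IsClosed Z := isClosed_eq hcont continuous_const
  have hZbdd : BddAbove Z := by
    refine ⟨M, fun u hu => ?_⟩
    by_contra hcon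
    push_neg at hcon
    exact absurd hu (by simpa [hZ] using (hpos u hcon.le).ne')
  refine ⟨sSup Z, hZclosed.csSup_mem hZne hZbdd, fun u hu => le_csSup hZbdd hu, ?_⟩
  exact lt_of_lt_of_le hrmem.1 (le_csSup hZbdd hr0)
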